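/- Let A, B be positive definite n×n complex matrices and X an n×n complex matrix such that the block matrix [[A, X], [X*, B]] is PPT. Then Re(X) ≤ A # B, −Re(X) ≤ A # B, Im(X) ≤ A # B, and −Im(X) ≤ A # B in the Loewner order, where Re(X) = (X + X*)/2 and Im(X) = (X − X*)/(2i). -/

import Mathlib

open Matrix ComplexOrder
open scoped Classical

open scoped MatrixOrder in
/-- The geometric mean `P # Q = P^{1/2} (P^{-1/2} Q P^{-1/2})^{1/2} P^{1/2}` of two
positive definite complex matrices (junk value `0` if `P` or `Q` is not positive definite). -/
noncomputable def geomMean {n : ℕ} (P Q : Matrix (Fin n) (Fin n) ℂ) :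
    Matrix (Fin n) (Fin n) ℂ :=
  if h : P.PosDef ∧ Q.PosDef then
    have hs : (((CFC.sqrt P)⁻¹) * Q * ((CFC.sqrt P)⁻¹)).PosSemidef := by
      have h1 := h.2.posSemidef.conjTranspose_mul_mul_same ((CFC.sqrt P)⁻¹)
      rwa [Matrix.conjTranspose_nonsing_inv, (CFC.sqrt_nonneg P).posSemidef.1.eq] at h1
    CFC.sqrt P * CFC.sqrt ((CFC.sqrt P)⁻¹ * Q * (CFC.sqrt P)⁻¹) * CFC.sqrt P
  else 0

lemma herm_move {n : ℕ} {M : Matrix (Fin n) (Fin n) ℂ} (hM : M.IsHermitian)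
    (w u : Fin n → ℂ) : star w ⬝ᵥ (M *ᵥ u) = star (M *ᵥ w) ⬝ᵥ u := by
  rw [dotProduct_mulVec, star_mulVec, hM.eq]

lemma key_sq_le {n : ℕ} {T Z : Matrix (Fin n) (Fin n) ℂ} (hT : T.PosSemidef)
    (hZ : Z.IsHermitian) (h : (T * T - Z * Z).PosSemidef) : (T - Z).PosSemidef := by
  have hM : (T - Z).IsHermitian := hT.1.sub hZ
  refine hM.posSemidef_iff_eigenvalues_nonneg.mpr ?_
  intro i
  by_contra hneg
  push_neg at hneg
  rw [Pi.zero_apply] at hneg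
  set lam : ℝ := hM.eigenvalues i with hlam
  set w : Fin n → ℂ := ⇑(hM.eigenvectorBasis i) with hwdef
  have hw : (T - Z) *ᵥ w = (lam : ℂ) • w := by
    have := hM.mulVec_eigenvectorBasis i
    rw [← hwdef] at this
    rw [this]
    ext j
    simp [RCLike.real_smul_eq_coe_smul (K := ℂ), ← hlam]
  have hw1 : star w ⬝ᵥ w = 1 := by
    have h1 : ‖hM.eigenvectorBasis i‖ = 1 := hM.eigenvectorBasis.orthonormal.1 i
    have h2 : (inner ℂ (hM.eigenvectorBasis i) (hM.eigenvectorBasis i) : ℂ) = 1 := by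
      rw [inner_self_eq_norm_sq_to_K, h1]; norm_num
    rw [EuclideanSpace.inner_eq_star_dotProduct, dotProduct_comm] at h2
    exact h2
  have hZw : Z *ᵥ w = T *ᵥ w - (lam : ℂ) • w := by
    rw [← hw, sub_mulVec]; abel
  set t : ℂ := star w ⬝ᵥ (T *ᵥ w) with htdef
  have ht : 0 ≤ t := hT.dotProduct_mulVec_nonneg w
  have hkey := h.dotProduct_mulVec_nonneg w
  have expand : star w ⬝ᵥ ((T * T - Z * Z) *ᵥ w)
      = star (T *ᵥ w) ⬝ᵥ (T *ᵥ w) - star (Z *ᵥ w) ⬝ᵥ (Z *ᵥ w) := by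
    rw [sub_mulVec, dotProduct_sub, ← mulVec_mulVec, ← mulVec_mulVec,
      herm_move hT.1, herm_move hZ]
  have hc : star ((lam:ℂ) • w) = (lam:ℂ) • star w := by
    rw [star_smul, Complex.star_def, Complex.conj_ofReal]
  have hstar_t : star (T *ᵥ w) ⬝ᵥ w = t := by
    rw [star_dotProduct, ← htdef]
    rw [Complex.star_def, Complex.conj_eq_iff_im]
    exact ((Complex.nonneg_iff).mp ht).2.symm
  have e1 : star (T *ᵥ w - (lam:ℂ) • w) ⬝ᵥ (T *ᵥ w - (lam:ℂ) • w)
      = star (T *ᵥ w) ⬝ᵥ (T *ᵥ w) - (lam:ℂ) * (star (T *ᵥ w) ⬝ᵥ w)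
        - (lam:ℂ) * (star w ⬝ᵥ (T *ᵥ w)) + (lam:ℂ) * (lam:ℂ) * (star w ⬝ᵥ w) := by
    simp only [star_sub, hc, sub_dotProduct, dotProduct_sub, smul_dotProduct, dotProduct_smul,
      smul_eq_mul]
    ring
  rw [expand, hZw, e1, hstar_t, ← htdef, hw1] at hkey
  have hkey' : (0:ℂ) ≤ 2*(lam:ℂ)*t - (lam:ℂ)^2 := by
    convert hkey using 1; ring
  rw [Complex.nonneg_iff] at hkey' ht
  have hre : (2*(lam:ℂ)*t - (lam:ℂ)^2).re = 2*lam*t.re - lam^2 := by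
    simp [Complex.mul_re, Complex.sub_re, Complex.mul_im, ← Complex.ofReal_pow]
  rw [hre] at hkey'
  nlinarith [hkey'.1, ht.1, hneg, sq_nonneg lam, mul_nonneg (le_of_lt (neg_pos.mpr hneg)) ht.1]

open scoped MatrixOrder in
set_option maxHeartbeats 2000000 in
lemma le_geomMean {n : ℕ} {A B Y : Matrix (Fin n) (Fin n) ℂ} (hA : A.PosDef) (hB : B.PosDef)
    (hY : Y.IsHermitian) (h : (Matrix.fromBlocks A Y Yᴴ B).PosSemidef) :
    (geomMean A B - Y).PosSemidef := by
  classical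
  set S := CFC.sqrt A with hSdef
  have hS1 : S.IsHermitian := (CFC.sqrt_nonneg A).posSemidef.1
  have hSS : S * S = A := CFC.sqrt_mul_sqrt_self A hA.posSemidef.nonneg
  have hdetS : IsUnit S.det := by
    have hd : S.det * S.det = A.det := by rw [← det_mul, hSS]
    have hAdet : A.det ≠ 0 := hA.det_pos.ne'
    refine isUnit_iff_ne_zero.mpr (fun hz => hAdet ?_)
    rw [← hd, hz, mul_zero]
  have hSinv : S * S⁻¹ = 1 := mul_nonsing_inv S hdetS
  have hSinv' : S⁻¹ * S = 1 := nonsing_inv_mul S hdetS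
  have hS1inv : (S⁻¹)ᴴ = S⁻¹ := by rw [conjTranspose_nonsing_inv, hS1.eq]
  letI := hA.isUnit.invertible
  rw [Matrix.PosDef.fromBlocks₁₁ _ _ hA] at h
  have hAinv : A⁻¹ = S⁻¹ * S⁻¹ := by rw [← hSS, Matrix.mul_inv_rev]
  set Z := S⁻¹ * Y * S⁻¹ with hZdef
  set C := S⁻¹ * B * S⁻¹ with hCdef
  have hs' : C.PosSemidef := by
    have h1 := hB.posSemidef.conjTranspose_mul_mul_same S⁻¹
    rwa [hS1inv] at h1
  set T := CFC.sqrt C with hTdef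
  have hT : T.PosSemidef := (CFC.sqrt_nonneg C).posSemidef
  have hTT : T * T = C := CFC.sqrt_mul_sqrt_self C hs'.nonneg
  have hCZ : (T * T - Z * Z).PosSemidef := by
    rw [hTT]
    have h2 := h.conjTranspose_mul_mul_same S⁻¹
    rw [hS1inv] at h2
    convert h2 using 1
    case e'_3 => rfl
    rw [hCdef, hZdef, hAinv, hY.eq]
    simp only [Matrix.sub_mul, Matrix.mul_sub, Matrix.mul_assoc]
  have hZH : Z.IsHermitian := by
    rw [hZdef]
    unfold Matrix.IsHermitian
    simp only [conjTranspose_mul, hS1inv, hY.eq, Matrix.mul_assoc]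
  have hTZ := key_sq_le hT hZH hCZ
  have final := hTZ.mul_mul_conjTranspose_same S
  rw [hS1.eq] at final
  have feq : S * (T - Z) * S = S * T * S - Y := by
    rw [hZdef]
    have hYs : S * (S⁻¹ * Y * S⁻¹) * S = Y := by
      rw [show S * (S⁻¹ * Y * S⁻¹) = S * S⁻¹ * Y * S⁻¹ by simp [Matrix.mul_assoc],
        hSinv, Matrix.one_mul, Matrix.mul_assoc, hSinv', Matrix.mul_one]
    rw [Matrix.mul_sub, Matrix.sub_mul, hYs]
  rw [feq] at final
  rw [geomMean, dif_pos ⟨hA, hB⟩]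
  exact final

lemma psd_half {m : Type*} [Fintype m] {M : Matrix m m ℂ} (hM : M.PosSemidef) :
    ((2:ℂ)⁻¹ • M).PosSemidef := by
  refine .of_dotProduct_mulVec_nonneg ?_ ?_
  · unfold Matrix.IsHermitian
    rw [conjTranspose_smul, hM.1.eq]
    norm_num
  · intro x
    rw [Matrix.smul_mulVec, dotProduct_smul, smul_eq_mul]
    refine mul_nonneg ?_ (hM.dotProduct_mulVec_nonneg x)
    rw [Complex.nonneg_iff]
    norm_num

lemma conj_block {n : ℕ} {A B X : Matrix (Fin n) (Fin n) ℂ} (c : ℂ) (hc : star c * c = 1)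
    (hH : (Matrix.fromBlocks A X Xᴴ B).PosSemidef) :
    (Matrix.fromBlocks A (c • X) ((star c) • Xᴴ) B).PosSemidef := by
  have h := hH.conjTranspose_mul_mul_same ((Matrix.fromBlocks 1 0 0 (c • 1) : Matrix (Fin n ⊕ Fin n) (Fin n ⊕ Fin n) ℂ))
  convert h using 1
  rw [Matrix.fromBlocks_conjTranspose, Matrix.fromBlocks_multiply, Matrix.fromBlocks_multiply]
  have hc' : c * (starRingEnd ℂ) c = 1 := by rw [mul_comm]; exact hc
  simp [Matrix.smul_mul, Matrix.mul_smul, smul_smul, hc']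

lemma block_Y {n : ℕ} {A B X : Matrix (Fin n) (Fin n) ℂ}
    (hH : (Matrix.fromBlocks A X Xᴴ B).PosSemidef)
    (hτ : (Matrix.fromBlocks A Xᴴ X B).PosSemidef)
    (c : ℂ) (hc : star c * c = 1) :
    (Matrix.fromBlocks A ((2:ℂ)⁻¹ • (c • X + (star c) • Xᴴ))
      ((2:ℂ)⁻¹ • (c • X + (star c) • Xᴴ)) B).PosSemidef := by
  have h1 := conj_block c hc hH
  have h2 := conj_block (star c) (by rwa [star_star, mul_comm]) (X := Xᴴ)
    (by rwa [conjTranspose_conjTranspose])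
  rw [star_star, conjTranspose_conjTranspose] at h2
  have h3 := psd_half (h1.add h2)
  convert h3 using 1
  rw [Matrix.fromBlocks_add, Matrix.fromBlocks_smul,
    show (2:ℂ)⁻¹ • (A + A) = A from by rw [← two_smul ℂ, smul_smul]; norm_num,
    show (2:ℂ)⁻¹ • (B + B) = B from by rw [← two_smul ℂ, smul_smul]; norm_num,
    add_comm ((star c) • Xᴴ) (c • X)]

theorem stmt19 {n : ℕ} (A B X : Matrix (Fin n) (Fin n) ℂ)
    (hA : A.PosDef) (hB : B.PosDef)
    (hH : (Matrix.fromBlocks A X Xᴴ B).PosSemidef)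
    (hτ : (Matrix.fromBlocks A Xᴴ X B).PosSemidef) :
    (geomMean A B - (2 : ℂ)⁻¹ • (X + Xᴴ)).PosSemidef ∧
      (geomMean A B + (2 : ℂ)⁻¹ • (X + Xᴴ)).PosSemidef ∧
      (geomMean A B - ((2 : ℂ) * Complex.I)⁻¹ • (X - Xᴴ)).PosSemidef ∧
      (geomMean A B + ((2 : ℂ) * Complex.I)⁻¹ • (X - Xᴴ)).PosSemidef := by
  have main : ∀ c : ℂ, star c * c = 1 →
      (geomMean A B - (2:ℂ)⁻¹ • (c • X + (star c) • Xᴴ)).PosSemidef := by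
    intro c hc
    have hYH : ((2:ℂ)⁻¹ • (c • X + (star c) • Xᴴ)).IsHermitian := by
      unfold Matrix.IsHermitian
      rw [conjTranspose_smul, conjTranspose_add, conjTranspose_smul, conjTranspose_smul,
        conjTranspose_conjTranspose, star_star]
      rw [show star ((2:ℂ)⁻¹) = (2:ℂ)⁻¹ by simp]
      rw [add_comm]
    refine le_geomMean hA hB hYH ?_
    rw [hYH.eq]
    exact block_Y hH hτ c hc
  refine ⟨?_, ?_, ?_, ?_⟩
  · have := main 1 (by norm_num)
    simpa using this
  · have := main (-1) (by norm_num)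
    rw [show geomMean A B + (2:ℂ)⁻¹ • (X + Xᴴ)
        = geomMean A B - (2:ℂ)⁻¹ • ((-1:ℂ) • X + (star (-1:ℂ)) • Xᴴ) from by
      rw [show star (-1:ℂ) = -1 by simp]; module]
    exact this
  · have := main (-Complex.I) (by simp [Complex.star_def])
    rw [show geomMean A B - ((2:ℂ) * Complex.I)⁻¹ • (X - Xᴴ)
        = geomMean A B - (2:ℂ)⁻¹ • ((-Complex.I) • X + (star (-Complex.I)) • Xᴴ) from by
      rw [show star (-Complex.I) = Complex.I by simp [Complex.star_def], mul_inv, Complex.inv_I]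
      module]
    exact this
  · have := main Complex.I (by simp [Complex.star_def])
    rw [show geomMean A B + ((2:ℂ) * Complex.I)⁻¹ • (X - Xᴴ)
        = geomMean A B - (2:ℂ)⁻¹ • (Complex.I • X + (star Complex.I) • Xᴴ) from by
      rw [show star Complex.I = -Complex.I by simp [Complex.star_def], mul_inv, Complex.inv_I]
      module]
    exact this
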